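/- In the ETH-reduction graph G', let C be the packing of 3-cycles encoding a subgraph isomorphism φ from H to G (consisting of the I-cycles ⟨u₁,u₂,φ(u)₃⟩ for u ∈ V(H) plus disjoint F-cycles covering the remaining vertices of W₃). If there exist u ≠ v in V(H) with {u,v} ∈ E(H) and {φ(u),φ(v)} ∉ E(G), then agent 1 (owning W₁ ∪ W₃ ∪ W₅ ∪ {z}) 2-rejects C: removing the two I-cycles ⟨u₁,u₂,φ(u)₃⟩ and ⟨v₁,v₂,φ(v)₃⟩ and adding the A-cycle ⟨u₁,v₁⟩ and the N-cycle through φ(u)₃, φ(v)₃, z yields a packing of pairwise vertex-disjoint cycles covering strictly more vertices of agent 1. -/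
import Mathlib


open Finset

/-- The vertex set of the ETH-reduction graph G': two copies of V(H), one copy of
V(G), two copies of [n_G - n_H], and an extra vertex z. -/
inductive Vtx (nH nG : ℕ) where
  | w1 : Fin nH → Vtx nH nG
  | w2 : Fin nH → Vtx nH nG
  | w3 : Fin nG → Vtx nH nG
  | w4 : Fin (nG - nH) → Vtx nH nG
  | w5 : Fin (nG - nH) → Vtx nH nG
  | z  : Vtx nH nG
deriving DecidableEq

/-- The directed edge relation of the ETH-reduction graph G' built from G and H
(using the linear order on Fin nG as the fixed ordering on V(G)). -/
def Edg {nH nG : ℕ} (G : SimpleGraph (Fin nG)) (H : SimpleGraph (Fin nH)) :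
    Vtx nH nG → Vtx nH nG → Prop
  | .w1 u, .w1 v => H.Adj u v
  | .w1 u, .w2 v => u = v
  | .w2 _, .w3 _ => True
  | .w3 _, .w1 _ => True
  | .w4 i, .w5 j => i = j
  | .w3 _, .w4 _ => True
  | .w5 _, .w3 _ => True
  | .w3 _, .z => True
  | .z, .w3 _ => True
  | .w3 x, .w3 y => ¬ G.Adj x y ∧ x < y
  | _, _ => False

/-- Agent 1 owns W₁ ∪ W₃ ∪ W₅ ∪ {z}. -/
def own1 {nH nG : ℕ} : Vtx nH nG → Bool
  | .w2 _ => false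
  | .w4 _ => false
  | _ => true

/-- Agent 2 owns W₂ ∪ W₄. -/
def own2 {nH nG : ℕ} (v : Vtx nH nG) : Bool := ! own1 v

/-- `C` is (the vertex set of) a directed cycle of length 2 or 3 in the digraph `E`. -/
def IsCyc {V : Type*} [DecidableEq V] (E : V → V → Prop) (C : Finset V) : Prop :=
  (∃ a b, a ≠ b ∧ C = {a, b} ∧ E a b ∧ E b a) ∨
  (∃ a b c, a ≠ b ∧ a ≠ c ∧ b ≠ c ∧ C = {a, b, c} ∧ E a b ∧ E b c ∧ E c a)

/-- A collection of finsets is pairwise disjoint. -/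
def PairwiseDisj {V : Type*} [DecidableEq V] (X : Finset (Finset V)) : Prop :=
  (X : Set (Finset V)).PairwiseDisjoint id

/-- The number of vertices of the given agent covered by the packing `C`. -/
def covB {V : Type*} [DecidableEq V] (own : V → Bool) (C : Finset (Finset V)) : ℕ :=
  ((C.biUnion id).filter (fun v => own v)).card

/-- The agent owning the vertices with `own v = true` c-rejects the packing `C`:
it can remove at most `c` cycles and add internal cycles so that the result is
pairwise vertex-disjoint and covers strictly more of its own vertices. -/
def CRejects {V : Type*} [DecidableEq V] (E : V → V → Prop) (own : V → Bool)
    (c : ℕ) (C : Finset (Finset V)) : Prop :=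
  ∃ Crej ⊆ C, Crej.card ≤ c ∧ ∃ Cint : Finset (Finset V),
    (∀ D ∈ Cint, IsCyc E D ∧ ∀ v ∈ D, own v = true) ∧
    PairwiseDisj ((C \ Crej) ∪ Cint) ∧
    covB own C < covB own ((C \ Crej) ∪ Cint)

/-- The agent owning the vertices with `own v = true` rejects the packing `C`
(no bound on the number of removed cycles). -/
def RejAny {V : Type*} [DecidableEq V] (E : V → V → Prop) (own : V → Bool)
    (C : Finset (Finset V)) : Prop :=
  ∃ Crej ⊆ C, ∃ Cint : Finset (Finset V),
    (∀ D ∈ Cint, IsCyc E D ∧ ∀ v ∈ D, own v = true) ∧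
    PairwiseDisj ((C \ Crej) ∪ Cint) ∧
    covB own C < covB own ((C \ Crej) ∪ Cint)

/-- If the packing encoding an injective map φ contains two I-cycles for u, v with
{u,v} ∈ E(H) but {φ(u),φ(v)} ∉ E(G), then agent 1 2-rejects it. -/
theorem stmt16 {nH nG : ℕ}
    (G : SimpleGraph (Fin nG)) (H : SimpleGraph (Fin nH))
    (φ : Fin nH → Fin nG) (hφ : Function.Injective φ)
    (Fc : Finset (Finset (Vtx nH nG)))
    (hFc : ∀ D ∈ Fc, ∃ x i, D = ({Vtx.w3 x, Vtx.w4 i, Vtx.w5 i} : Finset (Vtx nH nG)))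
    (C : Finset (Finset (Vtx nH nG)))
    (hC : C = Finset.image
        (fun u => ({Vtx.w1 u, Vtx.w2 u, Vtx.w3 (φ u)} : Finset (Vtx nH nG)))
        Finset.univ ∪ Fc)
    (hdisj : PairwiseDisj C)
    (u v : Fin nH) (huv : u ≠ v) (hH : H.Adj u v)
    (hG : ¬ G.Adj (φ u) (φ v)) :
    CRejects (Edg G H) own1 2 C := by
  classical
  set Iu : Finset (Vtx nH nG) := {Vtx.w1 u, Vtx.w2 u, Vtx.w3 (φ u)} with hIu
  set Iv : Finset (Vtx nH nG) := {Vtx.w1 v, Vtx.w2 v, Vtx.w3 (φ v)} with hIv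
  set A : Finset (Vtx nH nG) := {Vtx.w1 u, Vtx.w1 v} with hA
  set N : Finset (Vtx nH nG) := {Vtx.w3 (φ u), Vtx.w3 (φ v), Vtx.z} with hN
  have hφuv : φ u ≠ φ v := fun h => huv (hφ h)
  have hIuC : Iu ∈ C := by
    rw [hC]; exact Finset.mem_union_left _ (Finset.mem_image_of_mem _ (Finset.mem_univ u))
  have hIvC : Iv ∈ C := by
    rw [hC]; exact Finset.mem_union_left _ (Finset.mem_image_of_mem _ (Finset.mem_univ v))
  -- z is in no cycle of C
  have hzC : ∀ D ∈ C, Vtx.z ∉ D := by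
    intro D hD hz
    rw [hC] at hD
    rcases Finset.mem_union.1 hD with hD | hD
    · obtain ⟨w, -, rfl⟩ := Finset.mem_image.1 hD
      simp at hz
    · obtain ⟨x, i, rfl⟩ := hFc D hD
      simp at hz
  -- key: cycles kept from C avoid all vertices of A and N
  have key : ∀ D ∈ C \ ({Iu, Iv} : Finset (Finset (Vtx nH nG))), ∀ x ∈ D,
      x ≠ Vtx.w1 u ∧ x ≠ Vtx.w1 v ∧ x ≠ Vtx.w3 (φ u) ∧ x ≠ Vtx.w3 (φ v) ∧ x ≠ Vtx.z := by
    intro D hD x hx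
    obtain ⟨hDC, hDne⟩ := Finset.mem_sdiff.1 hD
    have hDu : D ≠ Iu := fun h => hDne (by simp [h])
    have hDv : D ≠ Iv := fun h => hDne (by simp [h])
    have hdu := hdisj hDC hIuC hDu
    have hdv := hdisj hDC hIvC hDv
    rw [hC] at hDC
    rcases Finset.mem_union.1 hDC with hD' | hD'
    · obtain ⟨w, -, rfl⟩ := Finset.mem_image.1 hD'
      have hwu : w ≠ u := fun h => hDu (by rw [h])
      have hwv : w ≠ v := fun h => hDv (by rw [h])
      simp only [Finset.mem_insert, Finset.mem_singleton] at hx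
      rcases hx with rfl | rfl | rfl
      · exact ⟨by simp [hwu], by simp [hwv], by simp, by simp, by simp⟩
      · exact ⟨by simp, by simp, by simp, by simp, by simp⟩
      · refine ⟨by simp, by simp, ?_, ?_, by simp⟩
        · intro h; injection h with h'; exact hwu (hφ h')
        · intro h; injection h with h'; exact hwv (hφ h')
    · obtain ⟨y, i, rfl⟩ := hFc D hD'
      have hyu : (Vtx.w3 y : Vtx nH nG) ≠ Vtx.w3 (φ u) := by
        intro h
        have : (Vtx.w3 y : Vtx nH nG) ∈ Iu := by rw [h]; simp [hIu]
        exact (Finset.disjoint_right.1 hdu) this (by simp)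
      have hyv : (Vtx.w3 y : Vtx nH nG) ≠ Vtx.w3 (φ v) := by
        intro h
        have : (Vtx.w3 y : Vtx nH nG) ∈ Iv := by rw [h]; simp [hIv]
        exact (Finset.disjoint_right.1 hdv) this (by simp)
      simp only [Finset.mem_insert, Finset.mem_singleton] at hx
      rcases hx with rfl | rfl | rfl
      · exact ⟨by simp, by simp, hyu, hyv, by simp⟩
      · exact ⟨by simp, by simp, by simp, by simp, by simp⟩
      · exact ⟨by simp, by simp, by simp, by simp, by simp⟩
  refine ⟨{Iu, Iv}, ?_, ?_, {A, N}, ?_, ?_, ?_⟩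
  · intro D hD
    simp only [Finset.mem_insert, Finset.mem_singleton] at hD
    rcases hD with rfl | rfl <;> assumption
  · exact Finset.card_insert_le _ _ |>.trans (by simp)
  · -- Cint cycles are 1-internal cycles
    intro D hD
    simp only [Finset.mem_insert, Finset.mem_singleton] at hD
    rcases hD with rfl | rfl
    · constructor
      · left
        exact ⟨Vtx.w1 u, Vtx.w1 v, by simp [huv], rfl, hH, hH.symm⟩
      · intro x hx
        simp only [hA, Finset.mem_insert, Finset.mem_singleton] at hx
        rcases hx with rfl | rfl <;> rfl
    · constructor
      · right
        rcases lt_or_gt_of_ne hφuv with hlt | hlt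
        · exact ⟨Vtx.w3 (φ u), Vtx.w3 (φ v), Vtx.z, by simp [hφuv], by simp, by simp, rfl,
            ⟨fun h => hG h, hlt⟩, trivial, trivial⟩
        · refine ⟨Vtx.w3 (φ v), Vtx.w3 (φ u), Vtx.z, by simp [hφuv.symm], by simp, by simp,
            ?_, ⟨fun h => hG h.symm, hlt⟩, trivial, trivial⟩
          rw [hN]; ext x; simp only [Finset.mem_insert, Finset.mem_singleton]; tauto
      · intro x hx
        simp only [hN, Finset.mem_insert, Finset.mem_singleton] at hx
        rcases hx with rfl | rfl | rfl <;> rfl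
  · -- pairwise disjointness
    intro s hs t ht hst
    simp only [Finset.coe_union, Set.mem_union, Finset.mem_coe, Finset.mem_insert,
      Finset.mem_singleton] at hs ht
    have hAN : Disjoint A N := by
      rw [Finset.disjoint_left]
      intro x hx
      simp only [hA, hN, Finset.mem_insert, Finset.mem_singleton] at hx ⊢
      rcases hx with rfl | rfl <;> simp
    have hkeep : ∀ D ∈ C \ ({Iu, Iv} : Finset (Finset (Vtx nH nG))),
        Disjoint D A ∧ Disjoint D N := by
      intro D hD
      constructor <;> rw [Finset.disjoint_right] <;> intro x hx <;>
        have := key D hD x <;>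
        simp only [hA, hN, Finset.mem_insert, Finset.mem_singleton] at hx
      · rcases hx with rfl | rfl <;> intro hxD <;>
          [exact (this hxD).1 rfl; exact (this hxD).2.1 rfl]
      · rcases hx with rfl | rfl | rfl <;> intro hxD <;>
          [exact (this hxD).2.2.1 rfl; exact (this hxD).2.2.2.1 rfl;
           exact (this hxD).2.2.2.2 rfl]
    rcases hs with hs | hs | hs <;> rcases ht with ht | ht | ht
    · exact hdisj (Finset.mem_sdiff.1 hs).1 (Finset.mem_sdiff.1 ht).1 hst
    · subst ht; exact (hkeep s hs).1
    · subst ht; exact (hkeep s hs).2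
    · subst hs; exact ((hkeep t ht).1).symm
    · exact absurd (hs.trans ht.symm) hst
    · subst hs; subst ht; exact hAN
    · subst hs; exact ((hkeep t ht).2).symm
    · subst hs; subst ht; exact hAN.symm
    · exact absurd (hs.trans ht.symm) hst
  · -- coverage strictly increases
    unfold covB
    apply Finset.card_lt_card
    constructor
    · intro x hx
      simp only [Finset.mem_filter, Finset.mem_biUnion, id] at hx ⊢
      obtain ⟨⟨D, hD, hxD⟩, hown⟩ := hx
      refine ⟨?_, hown⟩
      by_cases hDrej : D ∈ ({Iu, Iv} : Finset (Finset (Vtx nH nG)))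
      · simp only [Finset.mem_insert, Finset.mem_singleton] at hDrej
        have : x ∈ A ∨ x ∈ N := by
          rcases hDrej with rfl | rfl <;>
            simp only [hIu, hIv, Finset.mem_insert, Finset.mem_singleton] at hxD
          · rcases hxD with rfl | rfl | rfl
            · left; simp [hA]
            · exact absurd hown (by simp [own1])
            · right; simp [hN]
          · rcases hxD with rfl | rfl | rfl
            · left; simp [hA]
            · exact absurd hown (by simp [own1])
            · right; simp [hN]
        rcases this with h | h
        · exact ⟨A, Finset.mem_union_right _ (by simp), h⟩
        · exact ⟨N, Finset.mem_union_right _ (by simp), h⟩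
      · exact ⟨D, Finset.mem_union_left _ (Finset.mem_sdiff.2 ⟨hD, hDrej⟩), hxD⟩
    · intro hsub
      have hz : (Vtx.z : Vtx nH nG) ∈
          (((C \ {Iu, Iv}) ∪ {A, N}).biUnion id).filter (fun x => own1 x = true) := by
        simp only [Finset.mem_filter, Finset.mem_biUnion, id]
        exact ⟨⟨N, Finset.mem_union_right _ (by simp), by simp [hN]⟩, rfl⟩
      have := hsub hz
      simp only [Finset.mem_filter, Finset.mem_biUnion, id] at this
      obtain ⟨⟨D, hD, hzD⟩, -⟩ := this
      exact hzC D hD hzD
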